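/- For a ∈ M, the subcategory C_a of representations of the linearly oriented quiver A_n is a torsion class (closed under quotients and extensions) if and only if a is a bracket vector. -/

import Mathlib

open Classical

/-- A representation of a quiver (given by vertex type `ι`, arrow type `E`,
and source/target maps `s t : E → ι`) over a field `K`: a finite-dimensional
`K`-vector space at each vertex and a linear map along each arrow. -/
structure QRep (K : Type) [Field K] {ι : Type} {E : Type} (s t : E → ι) : Type 1 where
  V : ι → Type
  [addV : ∀ i, AddCommGroup (V i)]
  [modV : ∀ i, Module K (V i)]
  [fdV : ∀ i, FiniteDimensional K (V i)]
  f : ∀ e : E, V (s e) →ₗ[K] V (t e)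

attribute [instance] QRep.addV QRep.modV QRep.fdV

namespace QRep

variable {K : Type} [Field K] {ι E : Type} {s t : E → ι}

/-- A morphism of representations: linear maps at each vertex commuting with the arrow maps. -/
structure Hom (X Y : QRep K s t) : Type where
  φ : ∀ i, X.V i →ₗ[K] Y.V i
  comm : ∀ e, (Y.f e).comp (φ (s e)) = (φ (t e)).comp (X.f e)

def Hom.Surjective {X Y : QRep K s t} (f : Hom X Y) : Prop := ∀ i, Function.Surjective (f.φ i)

def Hom.Injective {X Y : QRep K s t} (f : Hom X Y) : Prop := ∀ i, Function.Injective (f.φ i)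

/-- Two representations are isomorphic if there is a morphism bijective at every vertex. -/
def Iso (X Y : QRep K s t) : Prop := ∃ f : Hom X Y, ∀ i, Function.Bijective (f.φ i)

/-- Direct sum of two representations, taken vertexwise. -/
def dsum (X Y : QRep K s t) : QRep K s t where
  V i := X.V i × Y.V i
  f e := (X.f e).prodMap (Y.f e)

instance : Module.Finite K PUnit :=
  Module.Finite.of_surjective (0 : K →ₗ[K] PUnit) (fun x => ⟨0, Subsingleton.elim _ _⟩)

/-- The zero representation. -/
def zero : QRep K s t where
  V _ := PUnit
  f _ := 0

/-- A representation is zero if all its vector spaces are zero. -/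
def IsZero (X : QRep K s t) : Prop := ∀ i, ∀ x : X.V i, x = 0

/-- Indecomposable: nonzero, and not isomorphic to a direct sum of two nonzero representations. -/
def Indec (X : QRep K s t) : Prop :=
  ¬ X.IsZero ∧ ∀ A B : QRep K s t, Iso X (A.dsum B) → A.IsZero ∨ B.IsZero

/-- Direct sum of a finite list of representations. -/
noncomputable def dsumList : List (QRep K s t) → QRep K s t
  | [] => zero
  | X :: L => X.dsum (dsumList L)

/-- An extension `Y` of `Z` by `X`: an injective morphism `X → Y` and a surjective
morphism `Y → Z` whose vertexwise kernel is the image of `X`. -/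
structure Extension (X Y Z : QRep K s t) : Type where
  incl : Hom X Y
  proj : Hom Y Z
  inj : ∀ i, Function.Injective (incl.φ i)
  surj : ∀ i, Function.Surjective (proj.φ i)
  exact : ∀ i, LinearMap.ker (proj.φ i) = LinearMap.range (incl.φ i)

/-- An extension is trivial (split) if there is a morphism `Y → X` restricting to the identity on `X`. -/
def Extension.Trivial {X Y Z : QRep K s t} (E : Extension X Y Z) : Prop :=
  ∃ r : Hom Y X, ∀ i x, r.φ i (E.incl.φ i x) = x

/-- A subrepresentation of `Y`: a subspace at each vertex, stable under the arrow maps. -/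
structure Sub (Y : QRep K s t) : Type where
  p : ∀ i, Submodule K (Y.V i)
  stable : ∀ e, ∀ x ∈ p (s e), Y.f e x ∈ p (t e)

def Sub.toRep {Y : QRep K s t} (S : Sub Y) : QRep K s t where
  V i := S.p i
  f e := (Y.f e).restrict (S.stable e)

/-- The quotient representation `Y/X`. -/
def Sub.quot {Y : QRep K s t} (S : Sub Y) : QRep K s t where
  V i := Y.V i ⧸ S.p i
  f e := Submodule.mapQ (S.p (s e)) (S.p (t e)) (Y.f e) (fun x hx => S.stable e x hx)

/-- The inclusion morphism of a subrepresentation. -/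
def Sub.incl {Y : QRep K s t} (S : Sub Y) : Hom S.toRep Y where
  φ i := (S.p i).subtype
  comm e := by ext x; rfl

/-- The quotient morphism onto the quotient representation. -/
def Sub.mkQ {Y : QRep K s t} (S : Sub Y) : Hom Y S.quot where
  φ i := (S.p i).mkQ
  comm e := by ext x; first | rfl | exact Submodule.mapQ_apply _ _ _ x

/-- The space of morphisms between two representations, as a subspace of the product of Hom spaces. -/
def HomSpace (X Y : QRep K s t) : Submodule K (∀ i, X.V i →ₗ[K] Y.V i) where
  carrier := {φ | ∀ e, (Y.f e).comp (φ (s e)) = (φ (t e)).comp (X.f e)}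
  add_mem' := by
    intro a b ha hb e
    simp only [Set.mem_setOf_eq] at ha hb
    simp [LinearMap.comp_add, LinearMap.add_comp, ha e, hb e]
  zero_mem' := by intro e; simp
  smul_mem' := by
    intro c a ha e
    simp only [Set.mem_setOf_eq] at ha
    simp [LinearMap.comp_smul, LinearMap.smul_comp, ha e]

end QRep
/-- The source of the `e`-th arrow of the linearly oriented quiver `Aₙ`
(vertices `0,…,n-1`, arrows `e → e+1` for `0 ≤ e < n-1`; 0-based indexing). -/
def ASrc (n : ℕ) (e : Fin (n - 1)) : Fin n := ⟨e.val, by have := e.isLt; omega⟩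

/-- The target of the `e`-th arrow of `Aₙ`. -/
def ATgt (n : ℕ) (e : Fin (n - 1)) : Fin n := ⟨e.val + 1, by have := e.isLt; omega⟩

/-- Representations of the linearly oriented quiver `Aₙ`. -/
abbrev ARep (K : Type) [Field K] (n : ℕ) := QRep K (ASrc n) (ATgt n)

/-- The canonical map from `M` to a submodule `T`: the identity if `T = ⊤`, zero otherwise. -/
noncomputable def toSub {K M : Type} [Field K] [AddCommGroup M] [Module K M]
    (T : Submodule K M) : M →ₗ[K] T :=
  if h : T = ⊤ then LinearMap.codRestrict T LinearMap.id (fun x => by simp [h]) else 0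

/-- The vertex spaces of the interval representation `E^{ij}`: `K` for `i ≤ p ≤ j`, zero otherwise. -/
def ESub (K : Type) [Field K] (n i j : ℕ) (p : Fin n) : Submodule K K :=
  if i ≤ p.val ∧ p.val ≤ j then ⊤ else ⊥

/-- The interval representation `E^{ij}` of `Aₙ` (0-based): one-dimensional spaces at
vertices `i,…,j`, identity maps between consecutive ones, zero elsewhere. -/
noncomputable def Eij (K : Type) [Field K] (n i j : ℕ) : ARep K n where
  V p := ESub K n i j p
  f e := (toSub (ESub K n i j (ATgt n e))).comp (ESub K n i j (ASrc n e)).subtype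

/-- Direct sum of interval representations indexed by a list of pairs. -/
noncomputable def intervalSum (K : Type) [Field K] (n : ℕ) (L : List (ℕ × ℕ)) : ARep K n :=
  QRep.dsumList (L.map fun pr => Eij K n pr.1 pr.2)

/-- Membership of the pair `(i,j)` in `F_a = {(i,j) : i ≤ j < i + a_i}` (0-based;
`pr.2 < n` ensures the interval lies in the vertex range). -/
def condF (n : ℕ) (a : ℕ → ℕ) (pr : ℕ × ℕ) : Prop :=
  pr.1 ≤ pr.2 ∧ pr.2 < n ∧ pr.2 < pr.1 + a pr.1

/-- An object lies in the full additive subcategory determined by the interval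
representations `E^{ij}` with `cond (i,j)`, i.e. it is isomorphic to a finite direct sum
of such intervals. -/
def InCat (K : Type) [Field K] (n : ℕ) (cond : ℕ × ℕ → Prop) (X : ARep K n) : Prop :=
  ∃ L : List (ℕ × ℕ), (∀ pr ∈ L, cond pr) ∧ QRep.Iso X (intervalSum K n L)

/-- The subcategory of intervals satisfying `cond` is closed under quotients. -/
def QuotClosedCat (K : Type) [Field K] (n : ℕ) (cond : ℕ × ℕ → Prop) : Prop :=
  ∀ X Y : ARep K n, InCat K n cond X → (∃ f : QRep.Hom X Y, f.Surjective) → InCat K n cond Y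

/-- The subcategory of intervals satisfying `cond` is closed under extensions. -/
def ExtClosedCat (K : Type) [Field K] (n : ℕ) (cond : ℕ × ℕ → Prop) : Prop :=
  ∀ X Y Z : ARep K n, InCat K n cond X → InCat K n cond Z →
    Nonempty (QRep.Extension X Y Z) → InCat K n cond Y

/-- `a` is a bracket vector (membership in `M` stated separately): whenever
`1 ≤ j ≤ a i` (and `i + j` is a vertex), `j + a_{i+j} ≤ a_i`. 0-based indices. -/
def IsBracketVecN (n : ℕ) (a : ℕ → ℕ) : Prop :=
  ∀ i < n, ∀ j : ℕ, 1 ≤ j → j ≤ a i → i + j < n → j + a (i + j) ≤ a i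

/-!
The invariant is `Reach W k l`: some vector at vertex `k`, carried along the arrows to vertex `l`,
does not come from vertex `k - 1`. For a direct sum of intervals it holds exactly when there is a
summand `E^{kj}` with `l ≤ j`. Every representation of `Aₙ` is such a sum (split off the interval
through a vector `v` at the first vertex `k` mapping nontrivially to the last nonzero vertex `l`),
so `C_a` consists of the `W` with `Reach W k l → l < k + a k`.

This bound passes to quotients since `Reach` pulls back along surjections. For an extension
`0 → X → Y → Z → 0` and `y` reaching `(k, l)` in `Y`, let `m` be the first vertex such that `X_m`
accounts for the image of `y` at `l` modulo what comes from below `k`. Then `X` reaches `(m, l)`,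
and if `m > k` then `Z` reaches `(k, m - 1)`; the bracket inequality for `j = m - k` combines the
bounds `l < m + a_m` and `m - k ≤ a_k`. Conversely, for `1 ≤ j ≤ a_i` and `e = i + j + a_{i+j} - 1`
the interval `E^{ie}` is an extension of `E^{i,i+j-1}` by `E^{i+j,e}`, both in `C_a`, and it lies in
`C_a` only if `e < i + a_i`.
-/

theorem Submodule.isCompl_span_singleton_comap {K M N : Type} [Field K] [AddCommGroup M]
    [Module K M] [AddCommGroup N] [Module K N] (g : M →ₗ[K] N) {w : M} (hw : g w ≠ 0)
    {T : Submodule K N} (hT : IsCompl (K ∙ g w) T) : IsCompl (K ∙ w) (T.comap g) := by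
  constructor
  · rw [Submodule.disjoint_def]
    rintro x hx hxT
    obtain ⟨c, rfl⟩ := Submodule.mem_span_singleton.1 hx
    have hc : c • g w = 0 := Submodule.disjoint_def.1 hT.disjoint _
      (Submodule.smul_mem _ c (Submodule.mem_span_singleton_self _)) (by simpa using hxT)
    rw [(smul_eq_zero.1 hc).resolve_right hw, zero_smul]
  · rw [codisjoint_iff, Submodule.eq_top_iff']
    intro x
    have hgx : g x ∈ (K ∙ g w) ⊔ T := by rw [hT.codisjoint.eq_top]; trivial
    obtain ⟨b, hb, u, hu, hbu⟩ := Submodule.mem_sup.1 hgx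
    obtain ⟨c, rfl⟩ := Submodule.mem_span_singleton.1 hb
    refine Submodule.mem_sup.2 ⟨c • w, Submodule.smul_mem _ c (Submodule.mem_span_singleton_self _),
      x - c • w, ?_, add_sub_cancel _ _⟩
    rwa [Submodule.mem_comap, map_sub, map_smul, ← hbu, add_sub_cancel_left]

namespace QRep

variable {K : Type} [Field K]

section General

variable {ι E : Type} {s t : E → ι}

def Hom.comp {X Y Z : QRep K s t} (g : Hom Y Z) (f : Hom X Y) : Hom X Z where
  φ i := g.φ i ∘ₗ f.φ i
  comm e := by rw [← LinearMap.comp_assoc, g.comm, LinearMap.comp_assoc, f.comm,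
    LinearMap.comp_assoc]

theorem Iso.refl (X : QRep K s t) : Iso X X :=
  ⟨⟨fun _ => LinearMap.id, fun _ => rfl⟩, fun _ => Function.bijective_id⟩

theorem Iso.trans {X Y Z : QRep K s t} (h₁ : Iso X Y) (h₂ : Iso Y Z) : Iso X Z := by
  obtain ⟨f, hf⟩ := h₁
  obtain ⟨g, hg⟩ := h₂
  exact ⟨g.comp f, fun i => (hg i).comp (hf i)⟩

theorem Iso.symm {X Y : QRep K s t} (h : Iso X Y) : Iso Y X := by
  obtain ⟨f, hf⟩ := h
  let e i := LinearEquiv.ofBijective (f.φ i) (hf i)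
  refine ⟨⟨fun i => (e i).symm.toLinearMap, fun a => ?_⟩, fun i => (e i).symm.bijective⟩
  ext y
  apply (e (t a)).injective
  have hy : f.φ (s a) ((e (s a)).symm y) = y := (e (s a)).apply_symm_apply y
  simpa [e, hy] using (LinearMap.congr_fun (f.comm a) ((e (s a)).symm y)).symm

theorem Iso.dsum_congr {A A' B B' : QRep K s t} (hA : Iso A A') (hB : Iso B B') :
    Iso (A.dsum B) (A'.dsum B') := by
  obtain ⟨f, hf⟩ := hA
  obtain ⟨g, hg⟩ := hB
  refine ⟨⟨fun i => (f.φ i).prodMap (g.φ i), fun e => ?_⟩, fun i => (hf i).prodMap (hg i)⟩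
  exact LinearMap.ext fun x => Prod.ext (LinearMap.congr_fun (f.comm e) x.1)
    (LinearMap.congr_fun (g.comm e) x.2)

theorem iso_zero_of_isZero {A : QRep K s t} (h : A.IsZero) : Iso A zero :=
  ⟨⟨fun _ => 0, fun _ => LinearMap.ext fun _ => Subsingleton.elim (α := PUnit) _ _⟩,
    fun i => ⟨fun x y _ => (h i x).trans (h i y).symm, fun _ => ⟨0, rfl⟩⟩⟩

theorem iso_dsum_of_isCompl {A Y : QRep K s t} (f : Hom A Y) (hf : f.Injective) (S : Sub Y)
    (h : ∀ i, IsCompl (LinearMap.range (f.φ i)) (S.p i)) : Iso (A.dsum S.toRep) Y := by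
  let e i := ((LinearEquiv.ofInjective _ (hf i)).prodCongr (LinearEquiv.refl K (S.p i))).trans
    (Submodule.prodEquivOfIsCompl _ _ (h i))
  refine ⟨⟨fun i => (e i).toLinearMap, fun a => LinearMap.ext fun x => ?_⟩,
    fun i => (e i).bijective⟩
  show Y.f a (f.φ _ x.1 + S.incl.φ _ x.2) = f.φ _ (A.f a x.1) + Y.f a (S.incl.φ _ x.2)
  rw [map_add, ← LinearMap.comp_apply, f.comm]
  rfl

variable [Fintype ι]

noncomputable def totalDim (X : QRep K s t) : ℕ := ∑ i, Module.finrank K (X.V i)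

theorem totalDim_toRep_lt {Y : QRep K s t} (S : Sub Y) {i : ι} (hi : S.p i ≠ ⊤) :
    totalDim S.toRep < totalDim Y :=
  Finset.sum_lt_sum (fun j _ => Submodule.finrank_le (S.p j))
    ⟨i, Finset.mem_univ _, Submodule.finrank_lt hi⟩

end General

variable {n : ℕ}

section PathMaps

/-- `W.f` with source and target spelled `⟨l, _⟩` and `⟨l + 1, _⟩`: rewriting needs this, as
`ASrc` and `ATgt` only unfold at default transparency. -/
def arrow (W : ARep K n) {l : ℕ} (hl : l + 1 < n) : W.V ⟨l, by omega⟩ →ₗ[K] W.V ⟨l + 1, hl⟩ :=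
  W.f ⟨l, by omega⟩

def pathMap (W : ARep K n) {k l : ℕ} (hkl : k ≤ l) (hl : l < n) :
    W.V ⟨k, hkl.trans_lt hl⟩ →ₗ[K] W.V ⟨l, hl⟩ :=
  Nat.leRec (motive := fun l h => ∀ hl : l < n, W.V ⟨k, h.trans_lt hl⟩ →ₗ[K] W.V ⟨l, hl⟩)
    (fun _ => LinearMap.id) (fun _ _ ih hl => W.arrow hl ∘ₗ ih (by omega)) hkl hl

variable (W : ARep K n)

@[simp]
theorem pathMap_refl {k : ℕ} (hk : k < n) (x : W.V ⟨k, hk⟩) : W.pathMap le_rfl hk x = x := by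
  simp [pathMap]

theorem pathMap_succ {k l : ℕ} (hkl : k ≤ l) (hl : l + 1 < n) (x : W.V ⟨k, by omega⟩) :
    W.pathMap (hkl.trans l.le_succ) hl x = W.arrow hl (W.pathMap hkl (by omega) x) := by
  rw [pathMap, pathMap, Nat.leRec_succ _ _ hkl]; rfl

theorem pathMap_pathMap {k m l : ℕ} (hkm : k ≤ m) (hml : m ≤ l) (hl : l < n)
    (x : W.V ⟨k, by omega⟩) :
    W.pathMap hml hl (W.pathMap hkm (by omega) x) = W.pathMap (hkm.trans hml) hl x := by
  induction l, hml using Nat.le_induction with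
  | base => simp
  | succ l hml ih => rw [pathMap_succ _ hml, pathMap_succ _ (hkm.trans hml), ih]

variable {W}

theorem Hom.pathMap_apply {X Y : ARep K n} (f : Hom X Y) {k l : ℕ} (hkl : k ≤ l) (hl : l < n)
    (x : X.V ⟨k, by omega⟩) :
    f.φ ⟨l, hl⟩ (X.pathMap hkl hl x) = Y.pathMap hkl hl (f.φ ⟨k, by omega⟩ x) := by
  induction l, hkl using Nat.le_induction with
  | base => simp
  | succ l hkl ih =>
    rw [pathMap_succ _ hkl, pathMap_succ _ hkl, ← ih]
    exact (LinearMap.congr_fun (f.comm ⟨l, by omega⟩) _).symm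

theorem pathMap_dsum {A B : ARep K n} {k l : ℕ} (hkl : k ≤ l) (hl : l < n)
    (x : (A.dsum B).V ⟨k, by omega⟩) :
    (A.dsum B).pathMap hkl hl x = (A.pathMap hkl hl x.1, B.pathMap hkl hl x.2) := by
  induction l, hkl using Nat.le_induction with
  | base => simp only [pathMap_refl]; rfl
  | succ l hkl ih => rw [pathMap_succ _ hkl, pathMap_succ _ hkl, pathMap_succ _ hkl, ih]; rfl

end PathMaps

section Reach

def lowerImage (W : ARep K n) {k l : ℕ} (hkl : k ≤ l) (hl : l < n) : Submodule K (W.V ⟨l, hl⟩) :=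
  match k, hkl with
  | 0, _ => ⊥
  | _ + 1, hkl => LinearMap.range (W.pathMap (Nat.le_of_succ_le hkl) hl)

/-- `W` has a summand `E^{kj}` with `l ≤ j` (see `reach_intervalSum_iff`). -/
def Reach (W : ARep K n) (k l : ℕ) : Prop :=
  ∃ (hkl : k ≤ l) (hl : l < n) (v : W.V ⟨k, by omega⟩), W.pathMap hkl hl v ∉ W.lowerImage hkl hl

theorem Hom.map_mem_lowerImage {X Y : ARep K n} (f : Hom X Y) {k l : ℕ} (hkl : k ≤ l)
    (hl : l < n) {x : X.V ⟨l, hl⟩} (hx : x ∈ X.lowerImage hkl hl) :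
    f.φ _ x ∈ Y.lowerImage hkl hl := by
  rcases k with _ | k
  · rw [lowerImage, Submodule.mem_bot] at hx ⊢
    rw [hx, map_zero]
  · obtain ⟨u, rfl⟩ := hx
    exact ⟨f.φ _ u, (f.pathMap_apply _ hl u).symm⟩

theorem Hom.exists_mem_lowerImage {X Y : ARep K n} (f : Hom X Y) (hf : f.Surjective)
    {k l : ℕ} (hkl : k ≤ l) (hl : l < n) {y : Y.V ⟨l, hl⟩} (hy : y ∈ Y.lowerImage hkl hl) :
    ∃ x ∈ X.lowerImage hkl hl, f.φ _ x = y := by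
  rcases k with _ | k
  · rw [lowerImage, Submodule.mem_bot] at hy
    exact ⟨0, Submodule.zero_mem _, by rw [hy, map_zero]⟩
  · obtain ⟨w, rfl⟩ := hy
    obtain ⟨u, rfl⟩ := hf _ w
    exact ⟨_, ⟨u, rfl⟩, f.pathMap_apply _ hl u⟩

theorem pathMap_mem_lowerImage (W : ARep K n) {m k l : ℕ} (hmk : m < k) (hkl : k ≤ l)
    (hl : l < n) (u : W.V ⟨m, by omega⟩) :
    W.pathMap (hmk.le.trans hkl) hl u ∈ W.lowerImage hkl hl := by
  obtain ⟨k, rfl⟩ : ∃ k', k = k' + 1 := ⟨k - 1, by omega⟩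
  exact ⟨W.pathMap (Nat.le_of_lt_succ hmk) (by omega) u, W.pathMap_pathMap _ _ hl u⟩

theorem pathMap_mem_lowerImage_of_mem (W : ARep K n) {k m l : ℕ} (hkm : k ≤ m) (hml : m ≤ l)
    (hl : l < n) {b : W.V ⟨m, hml.trans_lt hl⟩} (hb : b ∈ W.lowerImage hkm (hml.trans_lt hl)) :
    W.pathMap hml hl b ∈ W.lowerImage (hkm.trans hml) hl := by
  rcases k with _ | k
  · rw [lowerImage, Submodule.mem_bot] at hb ⊢
    rw [hb, map_zero]
  · obtain ⟨u, rfl⟩ := hb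
    exact ⟨u, (W.pathMap_pathMap _ _ hl u).symm⟩

theorem mem_lowerImage_dsum {A B : ARep K n} {k l : ℕ} (hkl : k ≤ l) (hl : l < n)
    (x : (A.dsum B).V ⟨l, hl⟩) :
    x ∈ (A.dsum B).lowerImage hkl hl ↔ x.1 ∈ A.lowerImage hkl hl ∧ x.2 ∈ B.lowerImage hkl hl := by
  rcases k with _ | k
  · simp only [lowerImage, Submodule.mem_bot]
    exact Prod.ext_iff
  · constructor
    · rintro ⟨u, rfl⟩
      rw [pathMap_dsum]
      exact ⟨⟨u.1, rfl⟩, ⟨u.2, rfl⟩⟩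
    · rintro ⟨⟨u₁, hu₁⟩, ⟨u₂, hu₂⟩⟩
      exact ⟨(u₁, u₂), (pathMap_dsum _ hl _).trans (Prod.ext hu₁ hu₂)⟩

theorem reach_of_surjective {X Y : ARep K n} (f : Hom X Y) (hf : f.Surjective) {k l : ℕ}
    (h : Reach Y k l) : Reach X k l := by
  obtain ⟨hkl, hl, y, hy⟩ := h
  obtain ⟨x, rfl⟩ := hf _ y
  exact ⟨hkl, hl, x, fun hx => hy (f.pathMap_apply hkl hl x ▸ f.map_mem_lowerImage hkl hl hx)⟩

theorem Iso.reach_iff {X Y : ARep K n} (h : Iso X Y) {k l : ℕ} : Reach X k l ↔ Reach Y k l := by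
  obtain ⟨f, hf⟩ := h.symm
  obtain ⟨g, hg⟩ := h
  exact ⟨reach_of_surjective f fun i => (hf i).2, reach_of_surjective g fun i => (hg i).2⟩

theorem reach_dsum_iff {A B : ARep K n} {k l : ℕ} :
    Reach (A.dsum B) k l ↔ Reach A k l ∨ Reach B k l := by
  constructor
  · rintro ⟨hkl, hl, x, hx⟩
    rw [mem_lowerImage_dsum, pathMap_dsum, not_and_or] at hx
    exact hx.imp (fun h => ⟨hkl, hl, x.1, h⟩) (fun h => ⟨hkl, hl, x.2, h⟩)
  · rintro (⟨hkl, hl, x, hx⟩ | ⟨hkl, hl, x, hx⟩)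
    · refine ⟨hkl, hl, (x, 0), fun h => hx ?_⟩
      have h1 := ((mem_lowerImage_dsum hkl hl _).1 h).1
      rwa [pathMap_dsum (A := A) (B := B) hkl hl (x, 0)] at h1
    · refine ⟨hkl, hl, (0, x), fun h => hx ?_⟩
      have h2 := ((mem_lowerImage_dsum hkl hl _).1 h).2
      rwa [pathMap_dsum (A := A) (B := B) hkl hl (0, x)] at h2

theorem not_reach_zero {k l : ℕ} : ¬ Reach (zero : ARep K n) k l :=
  fun ⟨hkl, hl, v, hv⟩ => hv (by
    rw [Subsingleton.elim (α := PUnit) (zero.pathMap hkl hl v) 0]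
    exact Submodule.zero_mem _)

end Reach

section Intervals

theorem coe_toSub {M : Type} [AddCommGroup M] [Module K M] (T : Submodule K M) (x : M) :
    (toSub T x : M) = if T = ⊤ then x else 0 := by
  unfold toSub
  split_ifs <;> rfl

theorem ESub_eq_top_iff {i j : ℕ} {p : Fin n} : ESub K n i j p = ⊤ ↔ i ≤ p ∧ p ≤ j := by
  unfold ESub
  split_ifs with h
  · exact iff_of_true rfl h
  · exact iff_of_false bot_ne_top h

namespace Eij

variable {i j i' j' : ℕ}

def val {p : Fin n} (x : (Eij K n i j).V p) : K := Subtype.val (show ESub K n i j p from x)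

theorem val_injective {p : Fin n} : Function.Injective (val : (Eij K n i j).V p → K) :=
  Subtype.val_injective

@[simp]
theorem val_zero {p : Fin n} : val (0 : (Eij K n i j).V p) = 0 := rfl

theorem val_eq_zero {p : Fin n} (hp : ¬ (i ≤ p ∧ p ≤ j)) (x : (Eij K n i j).V p) : val x = 0 := by
  have hx : val x ∈ ESub K n i j p := (show ESub K n i j p from x).2
  rwa [show ESub K n i j p = ⊥ from if_neg hp, Submodule.mem_bot] at hx

theorem eq_zero {p : Fin n} (hp : ¬ (i ≤ p ∧ p ≤ j)) (x : (Eij K n i j).V p) : x = 0 :=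
  val_injective (val_eq_zero hp x)

def mk (c : K) {p : ℕ} (hp : p < n) (hip : i ≤ p) (hpj : p ≤ j) : (Eij K n i j).V ⟨p, hp⟩ :=
  ⟨c, by rw [ESub_eq_top_iff.2 ⟨hip, hpj⟩]; trivial⟩

@[simp]
theorem val_mk (c : K) {p : ℕ} (hp : p < n) (hip : i ≤ p) (hpj : p ≤ j) :
    val (mk c hp hip hpj) = c := rfl

theorem val_toSub_comp_subtype {i' j' : ℕ} {p q : Fin n} (x : (Eij K n i j).V p) :
    val (i := i') (j := j') (p := q) ((toSub (ESub K n i' j' q) ∘ₗ (ESub K n i j p).subtype) x)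
      = if i' ≤ q ∧ q ≤ j' then val x else 0 := by
  have h := coe_toSub (ESub K n i' j' q) (val x)
  simp only [ESub_eq_top_iff] at h
  exact h

theorem val_f (e : Fin (n - 1)) (x : (Eij K n i j).V (ASrc n e)) :
    val ((Eij K n i j).f e x) = if i ≤ e.val + 1 ∧ e.val + 1 ≤ j then val x else 0 :=
  val_toSub_comp_subtype x

theorem val_arrow {l : ℕ} (hl : l + 1 < n) (x : (Eij K n i j).V ⟨l, by omega⟩) :
    val ((Eij K n i j).arrow hl x) = if i ≤ l + 1 ∧ l + 1 ≤ j then val x else 0 :=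
  val_f ⟨l, by omega⟩ x

theorem val_pathMap {k l : ℕ} (hik : i ≤ k) (hkl : k ≤ l) (hl : l < n) (hlj : l ≤ j)
    (x : (Eij K n i j).V ⟨k, by omega⟩) : val ((Eij K n i j).pathMap hkl hl x) = val x := by
  induction l, hkl using Nat.le_induction with
  | base => rw [pathMap_refl]
  | succ l hkl ih =>
    rw [pathMap_succ _ hkl, val_arrow, if_pos ⟨by omega, hlj⟩, ih (by omega) (by omega)]

variable (i' j') in
noncomputable def res (p : Fin n) : (Eij K n i j).V p →ₗ[K] (Eij K n i' j').V p :=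
  toSub (ESub K n i' j' p) ∘ₗ (ESub K n i j p).subtype

theorem val_res {p : Fin n} (x : (Eij K n i j).V p) :
    val (res i' j' p x) = if i' ≤ p ∧ p ≤ j' then val x else 0 :=
  val_toSub_comp_subtype x

noncomputable def hom (hi : i' ≤ i) (hj : j' ≤ j) : Hom (Eij K n i j) (Eij K n i' j') where
  φ := res i' j'
  comm e := by
    ext x
    apply val_injective
    simp only [LinearMap.comp_apply]
    rw [val_f, val_res, val_res, val_f]
    by_cases hx : i ≤ (ASrc n e).val ∧ (ASrc n e).val ≤ j
    · simp only [ASrc, ATgt] at hx ⊢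
      split_ifs <;> simp_all <;> omega
    · simp [val_eq_zero hx x]

theorem hom_apply (hi : i' ≤ i) (hj : j' ≤ j) (p : Fin n) (x : (Eij K n i j).V p) :
    (hom hi hj).φ p x = res i' j' p x := rfl

noncomputable def extension {s m e : ℕ} (hsm : s ≤ m + 1) (hme : m ≤ e) :
    Extension (Eij K n (m + 1) e) (Eij K n s e) (Eij K n s m) where
  incl := hom hsm le_rfl
  proj := hom le_rfl hme
  inj p x y hxy := by
    by_cases hp : m + 1 ≤ p ∧ p ≤ e
    · apply val_injective
      have h := congrArg val hxy
      rwa [hom_apply, hom_apply, val_res, val_res, if_pos ⟨by omega, hp.2⟩,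
        if_pos ⟨by omega, hp.2⟩] at h
    · rw [eq_zero hp x, eq_zero hp y]
  surj p z := by
    by_cases hp : s ≤ p ∧ p ≤ m
    · refine ⟨mk (val z) p.isLt hp.1 (by omega), val_injective ?_⟩
      rw [hom_apply, val_res, if_pos hp, val_mk]
    · exact ⟨0, by rw [map_zero, eq_zero hp z]⟩
  exact p := by
    ext x
    rw [LinearMap.mem_ker, LinearMap.mem_range]
    constructor
    · intro hx
      by_cases hp : m + 1 ≤ p ∧ p ≤ e
      · refine ⟨mk (val x) p.isLt hp.1 hp.2, val_injective ?_⟩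
        rw [hom_apply, val_res, if_pos ⟨by omega, hp.2⟩, val_mk]
      · refine ⟨0, (map_zero _).trans (val_injective ?_).symm⟩
        by_cases hq : s ≤ p ∧ p ≤ e
        · have h := congrArg val hx
          rwa [hom_apply, val_res, if_pos ⟨hq.1, by omega⟩] at h
        · exact val_eq_zero hq x
    · rintro ⟨y, rfl⟩
      apply val_injective
      rw [hom_apply, hom_apply, val_res, val_res, val_zero]
      by_cases hp : m + 1 ≤ p ∧ p ≤ e
      · rw [if_neg (by omega)]
      · rw [val_eq_zero hp y, ite_self, ite_self]

end Eij

theorem reach_Eij_iff {i j k l : ℕ} :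
    Reach (Eij K n i j) k l ↔ i = k ∧ k ≤ l ∧ l ≤ j ∧ l < n := by
  constructor
  · rintro ⟨hkl, hl, v, hv⟩
    have hv₀ : (Eij K n i j).pathMap hkl hl v ≠ 0 := fun h => hv (h ▸ Submodule.zero_mem _)
    have hl' : i ≤ l ∧ l ≤ j := by
      by_contra h
      exact hv₀ (Eij.eq_zero h _)
    have hk' : i ≤ k ∧ k ≤ j := by
      by_contra h
      exact hv₀ (by rw [Eij.eq_zero h v, map_zero])
    refine ⟨?_, hkl, hl'.2, hl⟩
    by_contra hik
    obtain ⟨k, rfl⟩ : ∃ k', k = k' + 1 := ⟨k - 1, by omega⟩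
    refine hv ⟨Eij.mk (Eij.val v) (p := k) (by omega) (by omega) (by omega), Eij.val_injective ?_⟩
    rw [Eij.val_pathMap (by omega) _ hl hl'.2, Eij.val_pathMap hk'.1 _ hl hl'.2, Eij.val_mk]
  · rintro ⟨rfl, hkl, hlj, hl⟩
    refine ⟨hkl, hl, Eij.mk 1 (by omega) le_rfl (by omega), fun h => ?_⟩
    have hne : Eij.val ((Eij K n i j).pathMap hkl hl (Eij.mk 1 _ le_rfl (by omega))) ≠ 0 := by
      rw [Eij.val_pathMap le_rfl hkl hl hlj, Eij.val_mk]
      exact one_ne_zero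
    rcases i with _ | i
    · rw [(Submodule.mem_bot K).1 h] at hne
      exact hne Eij.val_zero
    · obtain ⟨u, hu⟩ := h
      rw [← hu, Eij.eq_zero (by simp) u, map_zero, Eij.val_zero] at hne
      exact hne rfl

theorem reach_intervalSum_iff {L : List (ℕ × ℕ)} {k l : ℕ} :
    Reach (intervalSum K n L) k l ↔ ∃ pr ∈ L, pr.1 = k ∧ k ≤ l ∧ l ≤ pr.2 ∧ l < n := by
  induction L with
  | nil => exact iff_of_false not_reach_zero (by simp)
  | cons pr L ih =>
    show Reach ((Eij K n pr.1 pr.2).dsum (intervalSum K n L)) k l ↔ _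
    rw [reach_dsum_iff, reach_Eij_iff, ih]
    simp only [List.mem_cons, exists_eq_or_imp]

end Intervals

section Extensions

def ReachBounded (a : ℕ → ℕ) (W : ARep K n) : Prop :=
  ∀ k l, Reach W k l → l < k + a k

theorem reachBounded_of_surjective {a : ℕ → ℕ} {X Y : ARep K n} (f : Hom X Y)
    (hf : f.Surjective) (hX : ReachBounded a X) : ReachBounded a Y :=
  fun k l h => hX k l (reach_of_surjective f hf h)

variable {X Y Z : ARep K n}

theorem Extension.reach_of_not_mem (E : Extension X Y Z) {k m l : ℕ} (hkm : k ≤ m) (hml : m ≤ l)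
    (hl : l < n) (y : Y.V ⟨k, by omega⟩)
    (h : ∀ x : X.V ⟨m, by omega⟩, Y.pathMap (hkm.trans hml) hl y
      - E.incl.φ _ (X.pathMap hml hl x) ∉ Y.lowerImage (hkm.trans hml) hl) :
    Reach Z k m := by
  refine ⟨hkm, by omega, E.proj.φ _ y, fun hy => ?_⟩
  rw [← E.proj.pathMap_apply] at hy
  obtain ⟨b, hb, hbz⟩ := E.proj.exists_mem_lowerImage E.surj hkm _ hy
  obtain ⟨x, hx⟩ : Y.pathMap hkm _ y - b ∈ LinearMap.range (E.incl.φ _) := by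
    rw [← E.exact, LinearMap.mem_ker, map_sub, hbz, sub_self]
  refine h x ?_
  rw [E.incl.pathMap_apply, hx, map_sub, Y.pathMap_pathMap, sub_sub_cancel]
  exact Y.pathMap_mem_lowerImage_of_mem hkm hml hl hb

theorem reachBounded_of_extension {a : ℕ → ℕ} (hbr : IsBracketVecN n a) (E : Extension X Y Z)
    (hX : ReachBounded a X) (hZ : ReachBounded a Z) : ReachBounded a Y := by
  rintro k l ⟨hkl, hl, y, hy⟩
  let P m := ∃ (hml : m ≤ l) (x : X.V ⟨m, by omega⟩),
    Y.pathMap hkl hl y - E.incl.φ _ (X.pathMap hml hl x) ∈ Y.lowerImage hkl hl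
  by_cases hP : ∃ m, P m
  swap
  · exact hZ k l (E.reach_of_not_mem hkl le_rfl hl y fun x hx => hP ⟨l, le_rfl, x, hx⟩)
  obtain ⟨m, ⟨hml, x, hx⟩, hmin⟩ : ∃ m, P m ∧ ∀ m' < m, ¬ P m' :=
    ⟨Nat.find hP, Nat.find_spec hP, fun _ => Nat.find_min hP⟩
  have hkm : k ≤ m := by
    by_contra! hmk
    have := add_mem hx (Y.pathMap_mem_lowerImage hmk hkl hl (E.incl.φ _ x))
    rw [← E.incl.pathMap_apply, sub_add_cancel] at this
    exact hy this
  have hXm : l < m + a m := by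
    refine hX m l ⟨hml, hl, x, fun hxm => ?_⟩
    rcases m with _ | m
    · rw [(Submodule.mem_bot K).1 hxm, map_zero, sub_zero] at hx
      exact hy hx
    · obtain ⟨x', hx'⟩ := hxm
      exact hmin m (by omega) ⟨by omega, x', by rwa [hx']⟩
  rcases hkm.eq_or_lt with rfl | hkm
  · exact hXm
  have hZm : m - 1 < k + a k :=
    hZ k (m - 1) (E.reach_of_not_mem (by omega) (by omega) hl y fun x' hx' =>
      hmin (m - 1) (by omega) ⟨by omega, x', hx'⟩)
  have := hbr k (by omega) (m - k) (by omega) (by omega) (by omega)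
  rw [Nat.add_sub_cancel' hkm.le] at this
  omega

end Extensions

section Decomposition

theorem pathMap_arrow (W : ARep K n) {m l : ℕ} (hml : m + 1 ≤ l) (hl : l < n)
    (x : W.V ⟨m, by omega⟩) :
    W.pathMap hml hl (W.arrow (by omega) x) = W.pathMap (by omega) hl x := by
  rw [← W.pathMap_pathMap m.le_succ hml hl, pathMap_succ _ le_rfl, pathMap_refl]

def comapSub (Y : ARep K n) {l : ℕ} (hl : l < n) (T : Submodule K (Y.V ⟨l, hl⟩)) : Sub Y where
  p q := if h : q.val ≤ l then T.comap (Y.pathMap h hl) else ⊤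
  stable := by
    rintro ⟨e, he⟩
    have he' : e + 1 < n := by omega
    show ∀ x ∈ (if h : e ≤ l then T.comap (Y.pathMap h hl) else ⊤ :
        Submodule K (Y.V ⟨e, Nat.lt_of_succ_lt he'⟩)),
      Y.arrow he' x ∈ (if h : e + 1 ≤ l then T.comap (Y.pathMap h hl) else ⊤ :
        Submodule K (Y.V ⟨e + 1, he'⟩))
    intro x hx
    by_cases hel : e + 1 ≤ l
    · rw [dif_pos (by omega : e ≤ l)] at hx
      rwa [dif_pos hel, Submodule.mem_comap, pathMap_arrow]
    · rw [dif_neg hel]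
      trivial

section Split

variable (Y : ARep K n) (l : ℕ) {k : ℕ} {hk : k < n} (v : Y.V ⟨k, hk⟩)

def lineVec (p : Fin n) : Y.V p :=
  if h : k ≤ p ∧ p ≤ l then Y.pathMap h.1 p.isLt v else 0

variable {Y l}

theorem lineVec_of_mem {p : Fin n} (h : k ≤ p ∧ p ≤ l) :
    lineVec Y l v p = Y.pathMap h.1 p.isLt v :=
  dif_pos h

theorem lineVec_of_not_mem {p : Fin n} (h : ¬ (k ≤ p ∧ p ≤ l)) : lineVec Y l v p = 0 :=
  dif_neg h

theorem f_lineVec (hmax : ∀ p : Fin n, l < p → ∀ x : Y.V p, x = 0) (e : Fin (n - 1))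
    (he : k ≤ e.val) : Y.f e (lineVec Y l v (ASrc n e)) = lineVec Y l v (ATgt n e) := by
  by_cases hel : e.val + 1 ≤ l
  · rw [lineVec_of_mem v (p := ASrc n e) ⟨he, by simp [ASrc]; omega⟩,
      lineVec_of_mem v (p := ATgt n e) ⟨by simp [ATgt]; omega, hel⟩]
    exact (Y.pathMap_succ he (by omega) v).symm
  · rw [lineVec_of_not_mem v (p := ATgt n e) (by simp [ATgt]; omega)]
    exact hmax _ (by simp [ATgt]; omega) _

noncomputable def lineHom (hmax : ∀ p : Fin n, l < p → ∀ x : Y.V p, x = 0) :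
    Hom (Eij K n k l) Y where
  φ p := LinearMap.toSpanSingleton K _ (lineVec Y l v p) ∘ₗ (ESub K n k l p).subtype
  comm e := by
    ext c
    show Y.f e (Eij.val c • lineVec Y l v (ASrc n e))
      = Eij.val ((Eij K n k l).f e c) • lineVec Y l v (ATgt n e)
    rw [map_smul, Eij.val_f]
    by_cases he : k ≤ e.val
    · rw [f_lineVec v hmax e he]
      split_ifs with h
      · rfl
      · rw [lineVec_of_not_mem v (p := ATgt n e) (by simpa [ATgt] using h), smul_zero, smul_zero]
    · rw [Eij.eq_zero (p := ASrc n e) (by simp [ASrc]; omega) c, Eij.val_zero, zero_smul,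
        ite_self, zero_smul]

variable (hmax : ∀ p : Fin n, l < p → ∀ x : Y.V p, x = 0)

theorem range_lineHom (p : Fin n) :
    LinearMap.range ((lineHom v hmax).φ p) = K ∙ lineVec Y l v p := by
  ext y
  rw [LinearMap.mem_range, Submodule.mem_span_singleton]
  constructor
  · rintro ⟨c, rfl⟩
    exact ⟨Eij.val c, rfl⟩
  · rintro ⟨c, rfl⟩
    by_cases h : k ≤ p ∧ p ≤ l
    · exact ⟨Eij.mk c p.isLt h.1 h.2, rfl⟩
    · exact ⟨0, by rw [map_zero, lineVec_of_not_mem v h, smul_zero]⟩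

theorem pathMap_lineVec (hl : l < n) {p : Fin n} (h : k ≤ p ∧ p ≤ l) :
    Y.pathMap h.2 hl (lineVec Y l v p) = Y.pathMap (h.1.trans h.2) hl v := by
  rw [lineVec_of_mem v h, pathMap_pathMap]

theorem lineHom_injective (hkl : k ≤ l) (hl : l < n) (hv : Y.pathMap hkl hl v ≠ 0) :
    (lineHom v hmax).Injective := by
  intro p c₁ c₂ hc
  by_cases h : k ≤ p ∧ p ≤ l
  · have hw : lineVec Y l v p ≠ 0 := fun h0 => hv (by rw [← pathMap_lineVec v hl h, h0, map_zero])
    exact Eij.val_injective (smul_left_injective K hw hc)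
  · rw [Eij.eq_zero h c₁, Eij.eq_zero h c₂]

theorem isCompl_range_lineHom (hkl : k ≤ l) (hl : l < n) (hv : Y.pathMap hkl hl v ≠ 0)
    {T : Submodule K (Y.V ⟨l, hl⟩)} (hT : IsCompl (K ∙ Y.pathMap hkl hl v) T)
    (hlow : ∀ m (hml : m ≤ l), m < k → ∀ x : Y.V ⟨m, by omega⟩, Y.pathMap hml hl x = 0)
    (p : Fin n) : IsCompl (LinearMap.range ((lineHom v hmax).φ p)) ((comapSub Y hl T).p p) := by
  rw [range_lineHom]
  by_cases hpl : p.val ≤ l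
  · rw [show (comapSub Y hl T).p p = T.comap (Y.pathMap hpl hl) from dif_pos hpl]
    by_cases hkp : k ≤ p.val
    · have hgw := pathMap_lineVec v hl ⟨hkp, hpl⟩
      exact Submodule.isCompl_span_singleton_comap _ (hgw ▸ hv) (hgw ▸ hT)
    · have htop : T.comap (Y.pathMap hpl hl) = ⊤ := Submodule.eq_top_iff'.2 fun x => by
        rw [Submodule.mem_comap, hlow _ hpl (by omega) x]
        exact T.zero_mem
      rw [lineVec_of_not_mem v (by omega), Submodule.span_zero_singleton, htop]
      exact isCompl_bot_top
  · rw [lineVec_of_not_mem v (by omega), Submodule.span_zero_singleton,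
      show (comapSub Y hl T).p p = ⊤ from dif_neg hpl]
    exact isCompl_bot_top

end Split

theorem exists_interval_summand (Y : ARep K n) (hY : ¬ Y.IsZero) :
    ∃ k l, k ≤ l ∧ l < n ∧
      ∃ S : Sub Y, Iso ((Eij K n k l).dsum S.toRep) Y ∧ totalDim S.toRep < totalDim Y := by
  obtain ⟨q, x, hx⟩ : ∃ q : Fin n, ∃ x : Y.V q, x ≠ 0 := by simpa [IsZero] using hY
  let P l := ∃ (hl : l < n) (x : Y.V ⟨l, hl⟩), x ≠ 0
  obtain ⟨l, ⟨hl, x₀, hx₀⟩, hmax⟩ : ∃ l, P l ∧ ∀ p : Fin n, l < p → ∀ x : Y.V p, x = 0 :=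
    ⟨_, Nat.findGreatest_spec q.isLt.le ⟨q.isLt, x, hx⟩, fun p hp x => by
      by_contra h
      exact Nat.findGreatest_is_greatest hp p.isLt.le ⟨p.isLt, x, h⟩⟩
  let Q k := ∃ (hkl : k ≤ l) (v : Y.V ⟨k, by omega⟩), Y.pathMap hkl hl v ≠ 0
  have hQ : ∃ k, Q k := ⟨l, le_rfl, x₀, by rwa [pathMap_refl]⟩
  obtain ⟨k, ⟨hkl, v, hv⟩, hlow⟩ : ∃ k, Q k ∧ ∀ m (hml : m ≤ l), m < k →
      ∀ x : Y.V ⟨m, by omega⟩, Y.pathMap hml hl x = 0 :=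
    ⟨_, Nat.find_spec hQ, fun m hml hmk x => by
      by_contra h
      exact Nat.find_min hQ hmk ⟨hml, x, h⟩⟩
  obtain ⟨T, hT⟩ := Submodule.exists_isCompl (K ∙ Y.pathMap hkl hl v)
  have hcompl := isCompl_range_lineHom v hmax hkl hl hv hT hlow
  refine ⟨k, l, hkl, hl, comapSub Y hl T,
    iso_dsum_of_isCompl _ (lineHom_injective v hmax hkl hl hv) _ hcompl,
    totalDim_toRep_lt _ (i := ⟨k, by omega⟩) fun htop => hv ?_⟩
  have hbot := eq_bot_of_isCompl_top (htop ▸ hcompl ⟨k, by omega⟩)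
  rw [range_lineHom, lineVec_of_mem v ⟨le_rfl, hkl⟩, pathMap_refl,
    Submodule.span_singleton_eq_bot] at hbot
  rw [hbot, map_zero]

theorem exists_iso_intervalSum (Y : ARep K n) :
    ∃ L : List (ℕ × ℕ), (∀ pr ∈ L, pr.1 ≤ pr.2 ∧ pr.2 < n) ∧ Iso Y (intervalSum K n L) := by
  induction hd : totalDim Y using Nat.strong_induction_on generalizing Y with
  | _ d ih =>
  by_cases hY : Y.IsZero
  · exact ⟨[], by simp, iso_zero_of_isZero hY⟩
  obtain ⟨k, l, hkl, hl, S, hS, hlt⟩ := exists_interval_summand Y hY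
  obtain ⟨L, hL, hSL⟩ := ih _ (hd ▸ hlt) S.toRep rfl
  refine ⟨(k, l) :: L, ?_, hS.symm.trans (Iso.dsum_congr (Iso.refl _) hSL)⟩
  simpa [hkl, hl] using hL

end Decomposition

end QRep

section TorsionClass

open QRep

variable {K : Type} [Field K] {n : ℕ} {a : ℕ → ℕ}

theorem inCat_condF_iff {Y : ARep K n} : InCat K n (condF n a) Y ↔ ReachBounded a Y := by
  constructor
  · rintro ⟨L, hL, hY⟩ k l hr
    obtain ⟨pr, hpr, rfl, -, hl, -⟩ := reach_intervalSum_iff.1 (hY.reach_iff.1 hr)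
    have := (hL pr hpr).2.2
    omega
  · intro hY
    obtain ⟨L, hL, hYL⟩ := exists_iso_intervalSum Y
    refine ⟨L, fun pr hpr => ?_, hYL⟩
    obtain ⟨hpr₁, hpr₂⟩ := hL pr hpr
    refine ⟨hpr₁, hpr₂, hY _ _ (hYL.reach_iff.2 ?_)⟩
    exact reach_intervalSum_iff.2 ⟨pr, hpr, rfl, hpr₁, le_rfl, hpr₂⟩

theorem reachBounded_Eij {i j : ℕ} (h : j < i + a i) : ReachBounded a (Eij K n i j) := by
  intro k l hr
  obtain ⟨rfl, -, hlj, -⟩ := reach_Eij_iff.1 hr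
  omega

theorem quotClosedCat_condF (a : ℕ → ℕ) : QuotClosedCat K n (condF n a) := by
  rintro X Y hX ⟨f, hf⟩
  exact inCat_condF_iff.2 (reachBounded_of_surjective f hf (inCat_condF_iff.1 hX))

theorem extClosedCat_condF (hbr : IsBracketVecN n a) : ExtClosedCat K n (condF n a) := by
  rintro X Y Z hX hZ ⟨E⟩
  exact inCat_condF_iff.2
    (reachBounded_of_extension hbr E (inCat_condF_iff.1 hX) (inCat_condF_iff.1 hZ))

theorem isBracketVecN_of_extClosedCat (hM : ∀ i < n, a i ≤ n - i)
    (hext : ExtClosedCat K n (condF n a)) : IsBracketVecN n a := by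
  intro i hi j hj hja hij
  obtain ⟨j, rfl⟩ : ∃ j', j = j' + 1 := ⟨j - 1, by omega⟩
  show j + 1 + a (i + j + 1) ≤ a i
  by_cases ha : a (i + j + 1) = 0
  · omega
  have hM' := hM (i + j + 1) hij
  obtain ⟨e, he⟩ : ∃ e, e = i + j + a (i + j + 1) := ⟨_, rfl⟩
  have hX : InCat K n (condF n a) (Eij K n (i + j + 1) e) :=
    inCat_condF_iff.2 (reachBounded_Eij (by omega))
  have hZ : InCat K n (condF n a) (Eij K n i (i + j)) :=
    inCat_condF_iff.2 (reachBounded_Eij (by omega))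
  have hY := hext _ _ _ hX hZ ⟨Eij.extension (by omega) (by omega)⟩
  have := inCat_condF_iff.1 hY i e (reach_Eij_iff.2 ⟨rfl, by omega, le_rfl, by omega⟩)
  omega

end TorsionClass

/-- for `a ∈ M`, the subcategory `C_a` is a torsion class (closed under
quotients and extensions) if and only if `a` is a bracket vector. -/
theorem stmt17 (K : Type) [Field K] (n : ℕ) (a : ℕ → ℕ) (hM : ∀ i < n, a i ≤ n - i) :
    (QuotClosedCat K n (condF n a) ∧ ExtClosedCat K n (condF n a)) ↔ IsBracketVecN n a :=
  ⟨fun h => isBracketVecN_of_extClosedCat hM h.2,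
    fun hbr => ⟨quotClosedCat_condF a, extClosedCat_condF hbr⟩⟩
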